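/- Let c be a normalized N-fermion coefficient vector whose one-particle reduced density matrix ρ₁(c) is diagonal (so its diagonal entries are the occupation numbers n_j(c)), and suppose the basis is adapted in the following sense: for every Hermitian d×d matrix h for which there exists λ ∈ ℝ with ĥ c = λ c, the diagonal matrix diag(h_{11},…,h_{dd}) also has the property that its induced one-body operator has c as an eigenvector with real eigenvalue. Then the set of real diagonal d×d matrices of the form B(Ac, c) + B(c, Ac), with A a skew-adjoint linear endomorphism of the coefficient space, equals the real linear span of the matrices diag(n_s − n(c)) for s ranging over the support of c, where n(c) = (n_1(c),…,n_d(c)) and diag(v) denotes the diagonal matrix with diagonal vector v. -/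
import Mathlib


open scoped BigOperators

noncomputable section

/-- An `N`-element configuration: an `N`-element subset of `Fin d`. -/
abbrev Config (N d : ℕ) := {s : Finset (Fin d) // s.card = N}

/-- An `N`-fermion coefficient vector. -/
abbrev CoeffVec (N d : ℕ) : Type := Config N d → ℂ

/-- Inner product on coefficient vectors, conjugate-linear in the first argument. -/
def cinner {N d : ℕ} (x y : CoeffVec N d) : ℂ := ∑ s : Config N d, star (x s) * y s

/-- Normalization of a coefficient vector. -/
def Normalized {N d : ℕ} (c : CoeffVec N d) : Prop := ∑ s : Config N d, ‖c s‖ ^ 2 = 1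

/-- The occupation vector of a configuration `s`. -/
def occVec {N d : ℕ} (s : Config N d) : Fin d → ℝ := fun j => if j ∈ s.val then 1 else 0

/-- Occupation numbers `n_j(c) = ∑_{s : j ∈ s} |c_s|²`. -/
def occ {N d : ℕ} (c : CoeffVec N d) (j : Fin d) : ℝ :=
  ∑ s : Config N d, if j ∈ s.val then ‖c s‖ ^ 2 else 0

/-- Embedding of a coefficient vector into the full Fock space of `Fin d`. -/
def embed {N d : ℕ} (c : CoeffVec N d) : Finset (Fin d) → ℂ :=
  fun s => if h : s.card = N then c ⟨s, h⟩ else 0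

/-- The annihilation operator `f_k` on Fock-space coefficient functions. -/
def annih {d : ℕ} (k : Fin d) (x : Finset (Fin d) → ℂ) : Finset (Fin d) → ℂ :=
  fun t => if k ∈ t then 0
    else (-1 : ℂ) ^ (t.filter (fun m => m < k)).card * x (insert k t)

/-- The creation operator `f_j†` on Fock-space coefficient functions. -/
def create {d : ℕ} (j : Fin d) (x : Finset (Fin d) → ℂ) : Finset (Fin d) → ℂ :=
  fun s => if j ∈ s
    then (-1 : ℂ) ^ (((s.erase j).filter (fun m => m < j)).card) * x (s.erase j)
    else 0

/-- The matrix-valued sesquilinear form `B(x,y)_{jk} = ⟨x, f_k† f_j y⟩`. -/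
def Bform {N d : ℕ} (x y : CoeffVec N d) : Matrix (Fin d) (Fin d) ℂ :=
  Matrix.of fun j k => ∑ s : Finset (Fin d), star (embed x s) * create k (annih j (embed y)) s

/-- The one-particle reduced density matrix `ρ₁(c)_{jk} = ⟨c, f_k† f_j c⟩`. -/
def rho1 {N d : ℕ} (c : CoeffVec N d) : Matrix (Fin d) (Fin d) ℂ := Bform c c

/-- The induced one-body operator `ĥ = ∑_{j,l} h_{jl} f_j† f_l` on Fock space. -/
def oneBody {d : ℕ} (h : Matrix (Fin d) (Fin d) ℂ) (x : Finset (Fin d) → ℂ) :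
    Finset (Fin d) → ℂ :=
  fun s => ∑ j : Fin d, ∑ l : Fin d, h j l * create j (annih l x) s

/-- The induced one-body operator `ĥ` acting on `N`-fermion coefficient vectors. -/
def oneBodyC {N d : ℕ} (h : Matrix (Fin d) (Fin d) ℂ) (c : CoeffVec N d) : CoeffVec N d :=
  fun s => oneBody h (embed c) s.val

/-- Action of a `d×d` matrix `u` on coefficient vectors by the `N`-th compound matrix
(i.e. the action of `u ∧ … ∧ u` on the Slater-determinant basis). -/
def compAct {N d : ℕ} (u : Matrix (Fin d) (Fin d) ℂ) (c : CoeffVec N d) : CoeffVec N d :=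
  fun s => ∑ t : Config N d,
    (Matrix.of fun a b : Fin N =>
      u (↑(s.val.orderIsoOfFin s.2 a)) (↑(t.val.orderIsoOfFin t.2 b))).det * c t


-- Auxiliary development
open scoped BigOperators
section
variable {N d : ℕ}

/-- star of a sign. -/
lemma star_neg_one_pow (n : ℕ) : star ((-1 : ℂ) ^ n) = (-1 : ℂ) ^ n := by
  rw [star_pow, star_neg, star_one]

/-- Adjoint relation: ⟨x, f_k† y⟩ = ⟨f_k x, y⟩ on Fock space. -/
lemma adjoint_create {d : ℕ} (k : Fin d) (x y : Finset (Fin d) → ℂ) :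
    ∑ s : Finset (Fin d), star (x s) * create k y s
      = ∑ s : Finset (Fin d), star (annih k x s) * y s := by
  have hL : ∀ s : Finset (Fin d), star (x s) * create k y s
      = if k ∈ s then (-1 : ℂ) ^ (((s.erase k).filter (fun m => m < k)).card)
          * (star (x s) * y (s.erase k)) else 0 := by
    intro s
    simp only [create, mul_ite, mul_zero]
    split_ifs with h
    · ring
    · rfl
  have hR : ∀ s : Finset (Fin d), star (annih k x s) * y s
      = if k ∈ s then 0 else (-1 : ℂ) ^ ((s.filter (fun m => m < k)).card)
          * (star (x (insert k s)) * y s) := by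
    intro s
    simp only [annih]
    split_ifs with h
    · simp
    · rw [star_mul', star_neg_one_pow]; ring
  simp only [hL, hR]
  rw [← Finset.sum_filter_of_ne (s := Finset.univ)
      (p := fun s => k ∈ s) (f := fun s => if k ∈ s then (-1 : ℂ) ^ (((s.erase k).filter (fun m => m < k)).card) * (star (x s) * y (s.erase k)) else 0)
      (by intro s _ hs; by_contra hk; simp [hk] at hs)]
  rw [← Finset.sum_filter_of_ne (s := Finset.univ)
      (p := fun s => k ∉ s) (f := fun s => if k ∈ s then 0 else (-1 : ℂ) ^ ((s.filter (fun m => m < k)).card) * (star (x (insert k s)) * y s))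
      (by intro s _ hs; by_contra hk; simp [hk] at hs)]
  refine Finset.sum_nbij' (fun s => s.erase k) (fun s => insert k s) ?_ ?_ ?_ ?_ ?_
  · intro a ha; simp only [Finset.mem_filter, Finset.mem_univ, true_and]
    exact Finset.notMem_erase _ _
  · intro a ha; simp only [Finset.mem_filter, Finset.mem_univ, true_and]
    exact Finset.mem_insert_self _ _
  · intro a ha; simp at ha; exact Finset.insert_erase ha
  · intro a ha; simp at ha; exact Finset.erase_insert ha
  · intro a ha; simp at ha
    rw [if_pos ha, if_neg (Finset.notMem_erase k a), Finset.insert_erase ha]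
end
section
variable {N d : ℕ}

/-- Number operator on the Fock space. -/
lemma create_annih_same {d : ℕ} (j : Fin d) (x : Finset (Fin d) → ℂ) (s : Finset (Fin d)) :
    create j (annih j x) s = if j ∈ s then x s else 0 := by
  simp only [create, annih]
  by_cases h : j ∈ s
  · rw [if_pos h, if_pos h, if_neg (Finset.notMem_erase j s), Finset.insert_erase h,
      ← mul_assoc, ← pow_add, Even.neg_one_pow ⟨_, rfl⟩, one_mul]
  · rw [if_neg h, if_neg h]

/-- Sum over Fock space of a function supported on `N`-element sets. -/
lemma sum_embed_support {N d : ℕ} (F : Finset (Fin d) → ℂ)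
    (hF : ∀ s, s.card ≠ N → F s = 0) :
    ∑ s : Finset (Fin d), F s = ∑ t : Config N d, F t.val := by
  rw [← Finset.sum_filter_of_ne (s := Finset.univ) (p := fun s : Finset (Fin d) => s.card = N)
    (by intro s _ hs; by_contra hk; exact hs (hF s hk))]
  exact Finset.sum_subtype _ (by simp) F

lemma embed_config (x : CoeffVec N d) (t : Config N d) : embed x t.val = x t := by
  show (if h : (t.val).card = N then x ⟨t.val, h⟩ else 0) = x t
  rw [dif_pos t.2]

lemma embed_card_ne (x : CoeffVec N d) (s : Finset (Fin d)) (hs : s.card ≠ N) :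
    embed x s = 0 := by simp [embed, hs]

/-- Diagonal entry of the B-form. -/
lemma Bform_diag (x y : CoeffVec N d) (j : Fin d) :
    Bform x y j j = ∑ t : Config N d, if j ∈ t.val then star (x t) * y t else 0 := by
  show (∑ s : Finset (Fin d), star (embed x s) * create j (annih j (embed y)) s) = _
  rw [sum_embed_support (N := N) _ (by
    intro s hs
    rw [embed_card_ne x s hs]
    simp)]
  refine Finset.sum_congr rfl fun t _ => ?_
  rw [create_annih_same, embed_config, mul_ite, mul_zero]
  split_ifs with h
  · rw [embed_config]
  · rfl

/-- Symmetric form of the B-form entries. -/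
lemma Bform_symm_form (x y : CoeffVec N d) (j k : Fin d) :
    Bform x y j k = ∑ s : Finset (Fin d), star (annih k (embed x) s) * annih j (embed y) s := by
  exact adjoint_create k (embed x) (annih j (embed y))

lemma Bform_star (x y : CoeffVec N d) (j k : Fin d) :
    star (Bform x y j k) = Bform y x k j := by
  rw [Bform_symm_form, Bform_symm_form, star_sum]
  refine Finset.sum_congr rfl fun s _ => ?_
  rw [star_mul', star_star, mul_comm]

end
section
variable {N d : ℕ}

lemma embed_add (x y : CoeffVec N d) (s : Finset (Fin d)) :
    embed (x + y) s = embed x s + embed y s := by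
  simp only [embed]; split_ifs with h <;> simp [Pi.add_apply]

lemma embed_smul (z : ℂ) (x : CoeffVec N d) (s : Finset (Fin d)) :
    embed (z • x) s = z * embed x s := by
  simp only [embed]; split_ifs with h <;> simp [Pi.smul_apply, smul_eq_mul]

lemma annih_embed_add (k : Fin d) (x y : CoeffVec N d) (s : Finset (Fin d)) :
    annih k (embed (x + y)) s = annih k (embed x) s + annih k (embed y) s := by
  simp only [annih]; split_ifs with h
  · simp
  · rw [embed_add]; ring

lemma annih_embed_smul (k : Fin d) (z : ℂ) (x : CoeffVec N d) (s : Finset (Fin d)) :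
    annih k (embed (z • x)) s = z * annih k (embed x) s := by
  simp only [annih]; split_ifs with h
  · simp
  · rw [embed_smul]; ring

lemma Bform_add_left (x x' y : CoeffVec N d) : Bform (x + x') y = Bform x y + Bform x' y := by
  ext j k
  show Bform (x+x') y j k = Bform x y j k + Bform x' y j k
  rw [Bform_symm_form, Bform_symm_form, Bform_symm_form, ← Finset.sum_add_distrib]
  refine Finset.sum_congr rfl fun s _ => ?_
  rw [annih_embed_add, star_add]; ring

lemma Bform_add_right (x y y' : CoeffVec N d) : Bform x (y + y') = Bform x y + Bform x y' := by
  ext j k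
  show Bform x (y+y') j k = Bform x y j k + Bform x y' j k
  rw [Bform_symm_form, Bform_symm_form, Bform_symm_form, ← Finset.sum_add_distrib]
  refine Finset.sum_congr rfl fun s _ => ?_
  rw [annih_embed_add]; ring

lemma Bform_smul_left (z : ℂ) (x y : CoeffVec N d) :
    Bform (z • x) y = star z • Bform x y := by
  ext j k
  show Bform (z • x) y j k = star z * Bform x y j k
  rw [Bform_symm_form, Bform_symm_form, Finset.mul_sum]
  refine Finset.sum_congr rfl fun s _ => ?_
  rw [annih_embed_smul, star_mul']; ring

lemma Bform_smul_right (z : ℂ) (x y : CoeffVec N d) :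
    Bform x (z • y) = z • Bform x y := by
  ext j k
  show Bform x (z • y) j k = z * Bform x y j k
  rw [Bform_symm_form, Bform_symm_form, Finset.mul_sum]
  refine Finset.sum_congr rfl fun s _ => ?_
  rw [annih_embed_smul]; ring

lemma cinner_star (x y : CoeffVec N d) : star (cinner x y) = cinner y x := by
  rw [cinner, cinner, star_sum]
  refine Finset.sum_congr rfl fun s _ => ?_
  rw [star_mul', star_star, mul_comm]

lemma cinner_add_right (x y y' : CoeffVec N d) :
    cinner x (y + y') = cinner x y + cinner x y' := by
  rw [cinner, cinner, cinner, ← Finset.sum_add_distrib]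
  refine Finset.sum_congr rfl fun s _ => ?_
  simp [Pi.add_apply]; ring

lemma cinner_smul_right (z : ℂ) (x y : CoeffVec N d) :
    cinner x (z • y) = z * cinner x y := by
  rw [cinner, cinner, Finset.mul_sum]
  refine Finset.sum_congr rfl fun s _ => ?_
  simp [Pi.smul_apply, smul_eq_mul]; ring

lemma cinner_smul_left (z : ℂ) (x y : CoeffVec N d) :
    cinner (z • x) y = star z * cinner x y := by
  rw [cinner, cinner, Finset.mul_sum]
  refine Finset.sum_congr rfl fun s _ => ?_
  simp [Pi.smul_apply, smul_eq_mul, star_mul']; ring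

lemma cinner_self_re (x : CoeffVec N d) :
    (cinner x x).re = ∑ s : Config N d, ‖x s‖ ^ 2 := by
  rw [cinner, Complex.re_sum]
  refine Finset.sum_congr rfl fun s _ => ?_
  rw [show star (x s) * x s = x s * star (x s) from mul_comm _ _]
  rw [show (star (x s) : ℂ) = starRingEnd ℂ (x s) from rfl, Complex.mul_conj, Complex.ofReal_re,
    Complex.normSq_eq_norm_sq]

end
section
variable {N d : ℕ}

lemma cinner_self_eq_zero (x : CoeffVec N d) (hx : (cinner x x).re = 0) : x = 0 := by
  funext s
  have h := cinner_self_re x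
  rw [hx] at h
  have hs : ‖x s‖ ^ 2 = 0 := by
    have := (Finset.sum_eq_zero_iff_of_nonneg (fun t _ => by positivity)).mp h.symm s
      (Finset.mem_univ s)
    exact this
  have : ‖x s‖ = 0 := by nlinarith [norm_nonneg (x s)]
  simpa using this

lemma cinner_self_one (c : CoeffVec N d) (hc : Normalized c) : cinner c c = 1 := by
  have hre := cinner_self_re c
  rw [hc] at hre
  have him : (cinner c c).im = 0 := by
    have := cinner_star c c
    have h2 : (starRingEnd ℂ) (cinner c c) = cinner c c := this
    have := Complex.conj_eq_iff_im.mp h2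
    exact this
  exact Complex.ext (by simp [hre]) (by simp [him])

/-- pairing of a one-body operator with cinner. -/
lemma cinner_oneBodyC (h : Matrix (Fin d) (Fin d) ℂ) (x y : CoeffVec N d) :
    cinner x (oneBodyC h y) = ∑ j : Fin d, ∑ l : Fin d, h j l * Bform x y l j := by
  have hB : ∀ j l : Fin d, Bform x y l j
      = ∑ t : Config N d, star (x t) * create j (annih l (embed y)) t.val := by
    intro j l
    show (∑ s : Finset (Fin d), star (embed x s) * create j (annih l (embed y)) s) = _
    rw [sum_embed_support (N := N) _ (by
      intro s hs; rw [embed_card_ne x s hs]; simp)]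
    exact Finset.sum_congr rfl fun t _ => by rw [embed_config]
  simp only [hB, Finset.mul_sum]
  have L : cinner x (oneBodyC h y) = ∑ t : Config N d, ∑ j : Fin d, ∑ l : Fin d,
      h j l * (star (x t) * create j (annih l (embed y)) t.val) := by
    rw [cinner]
    refine Finset.sum_congr rfl fun t _ => ?_
    rw [show oneBodyC h y t = ∑ j : Fin d, ∑ l : Fin d,
        h j l * create j (annih l (embed y)) t.val from rfl, Finset.mul_sum]
    refine Finset.sum_congr rfl fun j _ => ?_
    rw [Finset.mul_sum]
    exact Finset.sum_congr rfl fun l _ => by ring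
  rw [L, Finset.sum_comm]
  exact Finset.sum_congr rfl fun j _ => Finset.sum_comm

/-- Self-adjointness of hermitian one-body operators. -/
lemma cinner_oneBodyC_star (h : Matrix (Fin d) (Fin d) ℂ) (hh : h.IsHermitian)
    (x y : CoeffVec N d) :
    cinner x (oneBodyC h y) = star (cinner y (oneBodyC h x)) := by
  rw [cinner_oneBodyC, cinner_oneBodyC, star_sum]
  rw [Finset.sum_comm]
  refine Finset.sum_congr rfl fun j _ => ?_
  rw [star_sum]
  refine Finset.sum_congr rfl fun l _ => ?_
  rw [star_mul', Bform_star]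
  congr 1
  exact (Matrix.IsHermitian.apply hh l j).symm

/-- Action of a diagonal one-body operator. -/
lemma oneBodyC_diagonal (v : Fin d → ℂ) (y : CoeffVec N d) (t : Config N d) :
    oneBodyC (Matrix.diagonal v) y t
      = (∑ j : Fin d, if j ∈ t.val then v j else 0) * y t := by
  show (∑ j : Fin d, ∑ l : Fin d, Matrix.diagonal v j l * create j (annih l (embed y)) t.val) = _
  rw [Finset.sum_mul]
  refine Finset.sum_congr rfl fun j _ => ?_
  rw [Finset.sum_eq_single j]
  · rw [Matrix.diagonal_apply_eq, create_annih_same, mul_ite, mul_zero, ite_mul, zero_mul]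
    split_ifs with hj
    · rw [embed_config]
    · rfl
  · intro l _ hl
    rw [Matrix.diagonal_apply_ne' _ hl, zero_mul]
  · intro hj; exact absurd (Finset.mem_univ j) hj

end
section
variable {N d : ℕ}

lemma cinner_add_left (x x' y : CoeffVec N d) :
    cinner (x + x') y = cinner x y + cinner x' y := by
  rw [cinner, cinner, cinner, ← Finset.sum_add_distrib]
  exact Finset.sum_congr rfl fun s _ => by simp [Pi.add_apply]; ring

lemma cinner_sub_left (x x' y : CoeffVec N d) :
    cinner (x - x') y = cinner x y - cinner x' y := by
  rw [cinner, cinner, cinner, ← Finset.sum_sub_distrib]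
  exact Finset.sum_congr rfl fun s _ => by simp [Pi.sub_apply]; ring

lemma cinner_sub_right (x y y' : CoeffVec N d) :
    cinner x (y - y') = cinner x y - cinner x y' := by
  rw [cinner, cinner, cinner, ← Finset.sum_sub_distrib]
  exact Finset.sum_congr rfl fun s _ => by simp [Pi.sub_apply]; ring

lemma real_smul_matrix (r : ℝ) (M : Matrix (Fin d) (Fin d) ℂ) :
    r • M = ((r : ℂ)) • M := by
  ext j k
  simp [Matrix.smul_apply, Complex.real_smul]

lemma Bform_zero_left (y : CoeffVec N d) : Bform (0 : CoeffVec N d) y = 0 := by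
  have : (0 : CoeffVec N d) = (0 : ℂ) • (0 : CoeffVec N d) := by simp
  rw [this, Bform_smul_left]
  simp

lemma Bform_zero_right (x : CoeffVec N d) : Bform x (0 : CoeffVec N d) = 0 := by
  have : (0 : CoeffVec N d) = (0 : ℂ) • (0 : CoeffVec N d) := by simp
  rw [this, Bform_smul_right]
  simp

/-- From a vector `a` with `Re⟨c,a⟩ = 0` build a skew-adjoint map realizing `Φ a`. -/
lemma exists_skew (c : CoeffVec N d) (hc : Normalized c) (a : CoeffVec N d)
    (ha : (cinner c a).re = 0) :
    ∃ A : CoeffVec N d →ₗ[ℂ] CoeffVec N d,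
      (∀ x y : CoeffVec N d, cinner (A x) y = - cinner x (A y)) ∧
      Bform (A c) c + Bform c (A c) = Bform a c + Bform c a := by
  refine ⟨{ toFun := fun x => cinner c x • a - cinner a x • c
            map_add' := fun x y => by
              show cinner c (x + y) • a - cinner a (x + y) • c
                = (cinner c x • a - cinner a x • c) + (cinner c y • a - cinner a y • c)
              rw [cinner_add_right, cinner_add_right, add_smul, add_smul]
              abel
            map_smul' := fun z x => by
              show cinner c (z • x) • a - cinner a (z • x) • c
                = z • (cinner c x • a - cinner a x • c)
              rw [cinner_smul_right, cinner_smul_right, smul_sub, smul_smul, smul_smul] }, ?_, ?_⟩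
  · intro x y
    show cinner (cinner c x • a - cinner a x • c) y
      = - cinner x (cinner c y • a - cinner a y • c)
    rw [cinner_sub_left, cinner_sub_right, cinner_smul_left, cinner_smul_left,
      cinner_smul_right, cinner_smul_right]
    rw [← cinner_star x c, ← cinner_star x a, star_star, star_star]
    ring
  · show Bform (cinner c c • a - cinner a c • c) c + Bform c (cinner c c • a - cinner a c • c)
      = Bform a c + Bform c a
    rw [cinner_self_one c hc, one_smul]
    have key : ∀ z : ℂ, z.re = 0 → Bform (a - z • c) c + Bform c (a - z • c)
        = Bform a c + Bform c a := by
      intro z hz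
      have h1 : a - z • c = a + (-z) • c := by rw [neg_smul]; abel
      rw [h1, Bform_add_left, Bform_add_right, Bform_smul_left, Bform_smul_right]
      have h2 : star (-z) • Bform c c + (-z) • Bform c c = ((star (-z) + (-z))) • Bform c c := by
        rw [add_smul]
      have h3 : star (-z) + (-z) = 0 := by
        have : (-z).re = 0 := by simp [hz]
        rw [Complex.star_def, add_comm, Complex.add_conj, this]
        simp
      calc Bform a c + star (-z) • Bform c c + (Bform c a + (-z) • Bform c c)
          = Bform a c + Bform c a + ((star (-z) + (-z)) • Bform c c) := by
            rw [add_smul]; abel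
        _ = Bform a c + Bform c a := by rw [h3, zero_smul, add_zero]
    apply key
    rw [← cinner_star c a]
    simp [ha]
  done

end
section
variable {N d : ℕ}

/-- The submodule of matrices of the form `B(a,c) + B(c,a)` with `Re⟨c,a⟩ = 0`. -/
def Usub (c : CoeffVec N d) : Submodule ℝ (Matrix (Fin d) (Fin d) ℂ) where
  carrier := {X | ∃ a : CoeffVec N d, (cinner c a).re = 0 ∧ X = Bform a c + Bform c a}
  zero_mem' := ⟨0, by simp [cinner], by rw [Bform_zero_left, Bform_zero_right, add_zero]⟩
  add_mem' := by
    rintro X Y ⟨a, ha, rfl⟩ ⟨b, hb, rfl⟩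
    refine ⟨a + b, ?_, ?_⟩
    · rw [cinner_add_right, Complex.add_re, ha, hb, add_zero]
    · rw [Bform_add_left, Bform_add_right]; abel
  smul_mem' := by
    rintro r X ⟨a, ha, rfl⟩
    refine ⟨(r : ℂ) • a, ?_, ?_⟩
    · rw [cinner_smul_right]
      simp [Complex.mul_re, ha]
    · rw [Bform_smul_left, Bform_smul_right, Complex.star_def, Complex.conj_ofReal,
        real_smul_matrix, smul_add]

/-- Hermitian-type symmetry of `Φ a` entries. -/
lemma Phi_herm (c a : CoeffVec N d) (j k : Fin d) :
    star ((Bform a c + Bform c a) j k) = (Bform a c + Bform c a) k j := by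
  rw [Matrix.add_apply, Matrix.add_apply, star_add, Bform_star, Bform_star, add_comm]

end
section
variable {N d : ℕ}

lemma stdBasis_smul (j k : Fin d) (z : ℂ) :
    Matrix.single j k z = z • Matrix.single j k (1 : ℂ) := by
  ext a b
  simp only [Matrix.single, Matrix.smul_apply, Matrix.of_apply, smul_eq_mul]
  split_ifs <;> simp

/-- Every real-linear functional on complex matrices is represented by a matrix `w`. -/
lemma repr_functional (φ : Matrix (Fin d) (Fin d) ℂ →ₗ[ℝ] ℝ) :
    ∃ w : Matrix (Fin d) (Fin d) ℂ, ∀ X : Matrix (Fin d) (Fin d) ℂ,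
      φ X = (∑ j : Fin d, ∑ k : Fin d, star (w j k) * X j k).re := by
  classical
  set E : Fin d → Fin d → Matrix (Fin d) (Fin d) ℂ :=
    fun j k => Matrix.single j k (1 : ℂ) with hE
  refine ⟨Matrix.of fun j k => Complex.mk (φ (E j k)) (φ (Complex.I • E j k)), fun X => ?_⟩
  have hdecomp : X = ∑ j : Fin d, ∑ k : Fin d,
      ((X j k).re • E j k + (X j k).im • (Complex.I • E j k)) := by
    conv_lhs => rw [Matrix.matrix_eq_sum_single X]
    refine Finset.sum_congr rfl fun j _ => Finset.sum_congr rfl fun k _ => ?_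
    rw [stdBasis_smul]
    rw [real_smul_matrix, real_smul_matrix, smul_smul]
    rw [← add_smul]
    congr 1
    exact (Complex.re_add_im (X j k)).symm
  conv_lhs => rw [hdecomp]
  rw [map_sum, Complex.re_sum]
  refine Finset.sum_congr rfl fun j _ => ?_
  rw [map_sum, Complex.re_sum]
  refine Finset.sum_congr rfl fun k _ => ?_
  rw [map_add, map_smul, map_smul]
  have : (star (Matrix.of (fun j k => Complex.mk (φ (E j k)) (φ (Complex.I • E j k))) j k)
      * X j k).re
      = φ (E j k) * (X j k).re + φ (Complex.I • E j k) * (X j k).im := by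
    simp [Complex.mul_re, Complex.star_def]
  rw [this]
  simp [smul_eq_mul, mul_comm]

end
section
variable {N d : ℕ}

/-- Hermitian representation of a real functional on Hermitian matrices (up to factor 2). -/
lemma herm_repr (φ : Matrix (Fin d) (Fin d) ℂ →ₗ[ℝ] ℝ) :
    ∃ h : Matrix (Fin d) (Fin d) ℂ, h.IsHermitian ∧
      ∀ X : Matrix (Fin d) (Fin d) ℂ, (∀ j k, star (X j k) = X k j) →
        (∑ j : Fin d, ∑ k : Fin d, star (h j k) * X j k).re = 2 * φ X := by
  obtain ⟨w, hw⟩ := repr_functional φ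
  refine ⟨Matrix.of fun j k => w j k + star (w k j), ?_, ?_⟩
  · show Matrix.conjTranspose _ = _
    ext j k
    rw [Matrix.conjTranspose_apply, Matrix.of_apply, Matrix.of_apply, star_add, star_star,
      add_comm]
  · intro X hX
    have key : (∑ j : Fin d, ∑ k : Fin d, star ((Matrix.of fun j k => w j k + star (w k j)) j k) * X j k)
        = (∑ j : Fin d, ∑ k : Fin d, star (w j k) * X j k)
          + star (∑ j : Fin d, ∑ k : Fin d, star (w j k) * X j k) := by
      have hstar : star (∑ j : Fin d, ∑ k : Fin d, star (w j k) * X j k)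
          = ∑ j : Fin d, ∑ k : Fin d, w k j * X j k := by
        rw [star_sum]
        rw [Finset.sum_comm]
        refine Finset.sum_congr rfl fun j _ => ?_
        rw [star_sum]
        refine Finset.sum_congr rfl fun k _ => ?_
        rw [star_mul', star_star, hX, mul_comm]
      rw [hstar, ← Finset.sum_add_distrib]
      refine Finset.sum_congr rfl fun j _ => ?_
      rw [← Finset.sum_add_distrib]
      refine Finset.sum_congr rfl fun k _ => ?_
      rw [Matrix.of_apply, star_add, star_star, add_mul]
    rw [key, hw X]
    rw [show ((∑ j : Fin d, ∑ k : Fin d, star (w j k) * X j k)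
        + star (∑ j : Fin d, ∑ k : Fin d, star (w j k) * X j k))
      = ((2 * (∑ j : Fin d, ∑ k : Fin d, star (w j k) * X j k).re : ℝ) : ℂ) from
      Complex.add_conj _]
    rw [Complex.ofReal_re]

end
section
variable {N d : ℕ}

lemma exists_a (c : CoeffVec N d) (hc : Normalized c)
    (hadapt : ∀ h : Matrix (Fin d) (Fin d) ℂ, h.IsHermitian →
      (∃ lam : ℝ, oneBodyC h c = (lam : ℂ) • c) →
      ∃ lam' : ℝ,
        oneBodyC (Matrix.diagonal fun j => h j j) c = (lam' : ℂ) • c)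
    (s₀ : Config N d) (hs₀ : c s₀ ≠ 0) :
    (Matrix.diagonal fun j => ((occVec s₀ j - occ c j : ℝ) : ℂ)) ∈ Usub c := by
  classical
  set M₀ : Matrix (Fin d) (Fin d) ℂ :=
    Matrix.diagonal fun j => ((occVec s₀ j - occ c j : ℝ) : ℂ) with hM₀
  by_contra hno
  -- separating functional
  have hq : (Usub c).mkQ M₀ ≠ 0 := by
    intro h0
    exact hno ((Submodule.Quotient.mk_eq_zero (Usub c)).mp h0)
  obtain ⟨φ0, hφ0⟩ : ∃ φ0 : Module.Dual ℝ (Matrix (Fin d) (Fin d) ℂ ⧸ Usub c),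
      φ0 ((Usub c).mkQ M₀) ≠ 0 := by
    by_contra hall
    push_neg at hall
    exact hq ((Module.forall_dual_apply_eq_zero_iff ℝ _).mp hall)
  set φ : Matrix (Fin d) (Fin d) ℂ →ₗ[ℝ] ℝ := φ0.comp (Usub c).mkQ with hφ
  have hφU : ∀ X ∈ Usub c, φ X = 0 := by
    intro X hX
    have : (Usub c).mkQ X = 0 := (Submodule.Quotient.mk_eq_zero (Usub c)).mpr hX
    simp [hφ, this]
  have hφM₀ : φ M₀ ≠ 0 := hφ0
  -- Hermitian representative
  obtain ⟨h, hHerm, hrep⟩ := herm_repr φ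
  -- step 1: pairing with Φ a vanishes
  have hpair : ∀ a : CoeffVec N d, (cinner c a).re = 0 →
      (cinner a (oneBodyC h c)).re = 0 := by
    intro a ha
    have hmem : (Bform a c + Bform c a) ∈ Usub c := ⟨a, ha, rfl⟩
    have h0 : φ (Bform a c + Bform c a) = 0 := hφU _ hmem
    have hherm := Phi_herm c a
    have hkey := hrep (Bform a c + Bform c a) hherm
    rw [h0, mul_zero] at hkey
    -- identify the pairing with cinner
    have pairB : ∀ x y : CoeffVec N d,
        (∑ j : Fin d, ∑ k : Fin d, star (h j k) * Bform x y j k) = cinner x (oneBodyC h y) := by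
      intro x y
      rw [cinner_oneBodyC, Finset.sum_comm]
      refine Finset.sum_congr rfl fun k _ => Finset.sum_congr rfl fun j _ => ?_
      congr 1
      exact hHerm.apply k j
    have hid : (∑ j : Fin d, ∑ k : Fin d, star (h j k) * (Bform a c + Bform c a) j k)
        = cinner a (oneBodyC h c) + star (cinner a (oneBodyC h c)) := by
      rw [← cinner_oneBodyC_star h hHerm c a, ← pairB a c, ← pairB c a,
        ← Finset.sum_add_distrib]
      refine Finset.sum_congr rfl fun j _ => ?_
      rw [← Finset.sum_add_distrib]
      refine Finset.sum_congr rfl fun k _ => ?_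
      rw [Matrix.add_apply]
      ring
    rw [hid] at hkey
    rw [show (cinner a (oneBodyC h c) + star (cinner a (oneBodyC h c)))
        = ((2 * (cinner a (oneBodyC h c)).re : ℝ) : ℂ) from Complex.add_conj _,
      Complex.ofReal_re] at hkey
    linarith
  -- step 2: c is an eigenvector of ĥ
  have heig : ∃ lam : ℝ, oneBodyC h c = (lam : ℂ) • c := by
    set w0 := oneBodyC h c with hw0
    set μ : ℝ := (cinner c w0).re with hμ
    have key2 : ∀ a : CoeffVec N d, (cinner a w0).re = (cinner c a).re * μ := by
      intro a
      have ha' : (cinner c (a - ((cinner c a).re : ℂ) • c)).re = 0 := by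
        rw [cinner_sub_right, cinner_smul_right, cinner_self_one c hc, mul_one]
        simp
      have := hpair _ ha'
      rw [cinner_sub_left, cinner_smul_left, Complex.star_def, Complex.conj_ofReal] at this
      rw [Complex.sub_re] at this
      have : (cinner a w0).re = (((cinner c a).re : ℂ) * cinner c w0).re := by linarith
      rw [this]
      simp [Complex.mul_re, hμ]
    refine ⟨μ, ?_⟩
    have e1 : (cinner w0 w0).re = μ * μ := by
      have := key2 w0
      have e0 : (cinner c w0).re = μ := rfl
      rw [e0] at this
      linarith
    have e2 : (cinner w0 c).re = μ := by
      have := cinner_star c w0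
      have : (cinner w0 c).re = (cinner c w0).re := by
        rw [← this]; exact Complex.conj_re _
      rw [this]
    have hu : w0 - (μ : ℂ) • c = 0 := by
      apply cinner_self_eq_zero
      simp only [cinner_sub_left, cinner_sub_right, cinner_smul_left, cinner_smul_right,
        cinner_self_one c hc, Complex.star_def, Complex.conj_ofReal, mul_one]
      simp only [Complex.sub_re, Complex.mul_re, Complex.ofReal_re, Complex.ofReal_im,
        zero_mul, mul_zero, mul_one, sub_zero]
      have e0 : (cinner c w0).re = μ := rfl
      rw [e1, e2, e0]
      ring
    have := sub_eq_zero.mp hu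
    exact this
  obtain ⟨lam', hlam'⟩ := hadapt h hHerm heig
  -- step 3: diagonal eigenvalue equations
  have heigdiag : ∀ t : Config N d, c t ≠ 0 →
      (∑ j : Fin d, if j ∈ t.val then h j j else 0) = (lam' : ℂ) := by
    intro t ht
    have := congrFun hlam' t
    rw [oneBodyC_diagonal] at this
    have h2 : ((lam' : ℂ) • c) t = (lam' : ℂ) * c t := rfl
    rw [h2] at this
    exact mul_right_cancel₀ ht this
  -- step 4: contradiction
  apply hφM₀
  have hM₀herm : ∀ j k, star (M₀ j k) = M₀ k j := by
    intro j k
    by_cases hjk : j = k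
    · subst hjk; rw [hM₀, Matrix.diagonal_apply_eq]; exact Complex.conj_ofReal _
    · rw [hM₀, Matrix.diagonal_apply_ne _ hjk,
        Matrix.diagonal_apply_ne _ (fun hh : k = j => hjk hh.symm), star_zero]
  have hkey := hrep M₀ hM₀herm
  have hzero : (∑ j : Fin d, ∑ k : Fin d, star (h j k) * M₀ j k) = 0 := by
    have hcollapse : ∀ j : Fin d, (∑ k : Fin d, star (h j k) * M₀ j k)
        = h j j * ((occVec s₀ j : ℂ) - (occ c j : ℂ)) := by
      intro j
      rw [Finset.sum_eq_single j]
      · rw [hM₀, Matrix.diagonal_apply_eq, hHerm.apply j j, Complex.ofReal_sub]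
      · intro k _ hk
        rw [hM₀, Matrix.diagonal_apply_ne _ fun hh => hk hh.symm, mul_zero]
      · intro hj; exact absurd (Finset.mem_univ j) hj
    rw [Finset.sum_congr rfl (fun j _ => hcollapse j)]
    have e1 : (∑ j : Fin d, h j j * (occVec s₀ j : ℂ)) = (lam' : ℂ) := by
      rw [← heigdiag s₀ hs₀]
      refine Finset.sum_congr rfl fun j _ => ?_
      rw [occVec]
      split_ifs with hj <;> simp [hj]
    have e2 : (∑ j : Fin d, h j j * (occ c j : ℂ)) = (lam' : ℂ) := by
      have swap : (∑ j : Fin d, h j j * (occ c j : ℂ))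
          = ∑ t : Config N d, ((‖c t‖ ^ 2 : ℝ) : ℂ) * (∑ j : Fin d, if j ∈ t.val then h j j else 0) := by
        have step1 : ∀ j : Fin d, h j j * (occ c j : ℂ)
            = ∑ t : Config N d, if j ∈ t.val then ((‖c t‖ ^ 2 : ℝ) : ℂ) * h j j else 0 := by
          intro j
          rw [occ]
          push_cast
          rw [Finset.mul_sum]
          refine Finset.sum_congr rfl fun t _ => ?_
          split_ifs with ht <;> ring_nf <;> simp
        rw [Finset.sum_congr rfl (fun j _ => step1 j), Finset.sum_comm]
        refine Finset.sum_congr rfl fun t _ => ?_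
        rw [Finset.mul_sum]
        refine Finset.sum_congr rfl fun j _ => ?_
        split_ifs with ht <;> simp
      rw [swap]
      have : ∀ t : Config N d, ((‖c t‖ ^ 2 : ℝ) : ℂ) * (∑ j : Fin d, if j ∈ t.val then h j j else 0)
          = ((‖c t‖ ^ 2 : ℝ) : ℂ) * (lam' : ℂ) := by
        intro t
        by_cases ht : c t = 0
        · simp [ht]
        · rw [heigdiag t ht]
      rw [Finset.sum_congr rfl (fun t _ => this t), ← Finset.sum_mul]
      rw [← Complex.ofReal_sum, hc]
      simp
    rw [show (∑ j : Fin d, h j j * ((occVec s₀ j : ℂ) - (occ c j : ℂ)))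
      = (∑ j : Fin d, h j j * (occVec s₀ j : ℂ)) - (∑ j : Fin d, h j j * (occ c j : ℂ)) by
        rw [← Finset.sum_sub_distrib]; exact Finset.sum_congr rfl fun j _ => by ring]
    rw [e1, e2, sub_self]
  rw [hzero] at hkey
  simp at hkey
  linarith [hkey]

end
section
variable {N d : ℕ}

lemma cinner_zero_left (y : CoeffVec N d) : cinner 0 y = 0 := by simp [cinner]

lemma cinner_zero_right (x : CoeffVec N d) : cinner x 0 = 0 := by simp [cinner]

/-- The LHS set as a submodule. -/
def Pmod (c : CoeffVec N d) : Submodule ℝ (Matrix (Fin d) (Fin d) ℂ) where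
  carrier := { X : Matrix (Fin d) (Fin d) ℂ |
        (∃ A : CoeffVec N d →ₗ[ℂ] CoeffVec N d,
          (∀ x y : CoeffVec N d, cinner (A x) y = - cinner x (A y)) ∧
          X = Bform (A c) c + Bform c (A c)) ∧
        ∃ v : Fin d → ℝ, X = Matrix.diagonal fun j => ((v j : ℝ) : ℂ) }
  zero_mem' := by
    refine ⟨⟨0, fun x y => by simp [cinner_zero_left, cinner_zero_right], ?_⟩, ⟨0, by simp⟩⟩
    rw [LinearMap.zero_apply, Bform_zero_left, Bform_zero_right, add_zero]
  add_mem' := by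
    rintro X Y ⟨⟨A, hA, rfl⟩, v, hv⟩ ⟨⟨B, hB, rfl⟩, w, hw⟩
    refine ⟨⟨A + B, fun x y => ?_, ?_⟩, ⟨fun j => v j + w j, ?_⟩⟩
    · rw [LinearMap.add_apply, LinearMap.add_apply, cinner_add_left, cinner_add_right,
        hA, hB]
      ring
    · rw [LinearMap.add_apply, Bform_add_left, Bform_add_right]
      abel
    · rw [hv, hw, Matrix.diagonal_add]
      congr 1
      funext j
      push_cast
      rfl
  smul_mem' := by
    rintro r X ⟨⟨A, hA, rfl⟩, v, hv⟩
    refine ⟨⟨(r : ℂ) • A, fun x y => ?_, ?_⟩, ⟨fun j => r * v j, ?_⟩⟩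
    · rw [LinearMap.smul_apply, LinearMap.smul_apply, cinner_smul_left, cinner_smul_right,
        hA, Complex.star_def, Complex.conj_ofReal]
      ring
    · rw [LinearMap.smul_apply, Bform_smul_left, Bform_smul_right, Complex.star_def,
        Complex.conj_ofReal, real_smul_matrix, smul_add]
    · rw [hv]
      ext j k
      by_cases hjk : j = k
      · subst hjk
        rw [Matrix.smul_apply, Matrix.diagonal_apply_eq, Matrix.diagonal_apply_eq]
        push_cast [Complex.real_smul]
        ring
      · rw [Matrix.smul_apply, Matrix.diagonal_apply_ne _ hjk, Matrix.diagonal_apply_ne _ hjk,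
          smul_zero]

end
theorem stmt_12_aux (N d : ℕ) (hN : 1 ≤ N) (hNd : N ≤ d)
    (c : CoeffVec N d) (hc : Normalized c)
    (hdiag : ∀ j k : Fin d, j ≠ k → rho1 c j k = 0)
    (hadapt : ∀ h : Matrix (Fin d) (Fin d) ℂ, h.IsHermitian →
      (∃ lam : ℝ, oneBodyC h c = (lam : ℂ) • c) →
      ∃ lam' : ℝ,
        oneBodyC (Matrix.diagonal fun j => h j j) c = (lam' : ℂ) • c) :
    { X : Matrix (Fin d) (Fin d) ℂ |
        (∃ A : CoeffVec N d →ₗ[ℂ] CoeffVec N d,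
          (∀ x y : CoeffVec N d, cinner (A x) y = - cinner x (A y)) ∧
          X = Bform (A c) c + Bform c (A c)) ∧
        ∃ v : Fin d → ℝ, X = Matrix.diagonal fun j => ((v j : ℝ) : ℂ) } =
    ↑(Submodule.span ℝ
        { X : Matrix (Fin d) (Fin d) ℂ |
            ∃ s : Config N d, c s ≠ 0 ∧
              X = Matrix.diagonal fun j => ((occVec s j - occ c j : ℝ) : ℂ) }) := by
  classical
  apply Set.Subset.antisymm
  · -- forward inclusion
    rintro X ⟨⟨A, hskew, hXeq⟩, v, hv⟩
    set a : CoeffVec N d := A c with ha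
    set r : Config N d → ℝ := fun t => 2 * ((starRingEnd ℂ) (c t) * a t).re with hr
    have key1 : ∀ t : Config N d, star (a t) * c t + star (c t) * a t = ((r t : ℝ) : ℂ) := by
      intro t
      have h1 : star (a t) * c t = star ((starRingEnd ℂ) (c t) * a t) := by
        rw [star_mul']
        simp [Complex.star_def]
        ring
      rw [h1, show (star (c t) * a t : ℂ) = (starRingEnd ℂ) (c t) * a t from rfl, add_comm]
      exact Complex.add_conj _
    have key2 : (∑ t : Config N d, ((r t : ℝ) : ℂ)) = 0 := by
      have hskewcc := hskew c c
      have hsum : (∑ t : Config N d, ((r t : ℝ) : ℂ)) = cinner a c + cinner c a := by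
        rw [cinner, cinner, ← Finset.sum_add_distrib]
        exact Finset.sum_congr rfl fun t _ => (key1 t).symm
      rw [hsum, ha, hskewcc]
      ring
    have key2' : (∑ t : Config N d, r t) = 0 := by
      have := key2
      rw [← Complex.ofReal_sum] at this
      exact_mod_cast this
    have rzero : ∀ t : Config N d, c t = 0 → r t = 0 := by
      intro t ht
      simp [hr, ht]
    have key3 : ∀ j : Fin d, X j j = ∑ t : Config N d, if j ∈ t.val then ((r t : ℝ) : ℂ) else 0 := by
      intro j
      rw [hXeq, Matrix.add_apply, Bform_diag, Bform_diag, ← Finset.sum_add_distrib]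
      refine Finset.sum_congr rfl fun t _ => ?_
      split_ifs with hjt
      · rw [← key1 t]
      · rw [add_zero]
    have hXdecomp : X = ∑ t ∈ Finset.univ.filter (fun t : Config N d => c t ≠ 0),
        r t • (Matrix.diagonal fun j => ((occVec t j - occ c j : ℝ) : ℂ)) := by
      ext j k
      rw [Matrix.sum_apply]
      by_cases hjk : j = k
      · subst hjk
        have hterm : ∀ t : Config N d,
            (r t • (Matrix.diagonal fun j => ((occVec t j - occ c j : ℝ) : ℂ))) j j
            = ((r t : ℝ) : ℂ) * (occVec t j : ℂ) - ((r t : ℝ) : ℂ) * (occ c j : ℂ) := by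
          intro t
          rw [Matrix.smul_apply, Matrix.diagonal_apply_eq, Complex.real_smul,
            Complex.ofReal_sub]
          ring
        rw [Finset.sum_congr rfl fun t _ => hterm t, Finset.sum_sub_distrib]
        have e2 : (∑ t ∈ Finset.univ.filter (fun t : Config N d => c t ≠ 0),
            ((r t : ℝ) : ℂ) * (occ c j : ℂ)) = 0 := by
          rw [Finset.sum_filter_of_ne (by
            intro t _ hne
            by_contra hct
            rw [rzero t hct] at hne
            simp at hne)]
          rw [← Finset.sum_mul]
          rw [key2, zero_mul]
        have e1 : (∑ t ∈ Finset.univ.filter (fun t : Config N d => c t ≠ 0),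
            ((r t : ℝ) : ℂ) * (occVec t j : ℂ)) = X j j := by
          rw [Finset.sum_filter_of_ne (by
            intro t _ hne
            by_contra hct
            rw [rzero t hct] at hne
            simp at hne)]
          rw [key3 j]
          refine Finset.sum_congr rfl fun t _ => ?_
          rw [occVec]
          split_ifs with hjt <;> simp
        rw [e1, e2, sub_zero]
      · have hterm : ∀ t : Config N d,
            (r t • (Matrix.diagonal fun j => ((occVec t j - occ c j : ℝ) : ℂ))) j k = 0 := by
          intro t
          rw [Matrix.smul_apply, Matrix.diagonal_apply_ne _ hjk, smul_zero]
        rw [Finset.sum_congr rfl fun t _ => hterm t, Finset.sum_const_zero, hv,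
          Matrix.diagonal_apply_ne _ hjk]
    rw [hXdecomp]
    exact Submodule.sum_mem _ fun t ht => Submodule.smul_mem _ _
      (Submodule.subset_span ⟨t, (Finset.mem_filter.mp ht).2, rfl⟩)
  · -- backward inclusion
    intro X hX
    have hgen : { X : Matrix (Fin d) (Fin d) ℂ |
            ∃ s : Config N d, c s ≠ 0 ∧
              X = Matrix.diagonal fun j => ((occVec s j - occ c j : ℝ) : ℂ) } ⊆ ↑(Pmod c) := by
      rintro Y ⟨s₀, hs₀, rfl⟩
      obtain ⟨a, haperp, haeq⟩ := exists_a c hc hadapt s₀ hs₀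
      obtain ⟨A, hAskew, hAeq⟩ := exists_skew c hc a haperp
      exact ⟨⟨A, hAskew, by rw [hAeq, ← haeq]⟩, ⟨fun j => occVec s₀ j - occ c j, rfl⟩⟩
    exact Submodule.span_le.mpr hgen hX

/-- In an adapted basis of natural orbitals, the set of real diagonal matrices in the image
of the derivative of `c ↦ ρ₁(c)` (i.e. real diagonal matrices of the form
`B(Ac,c) + B(c,Ac)` with `A` skew-adjoint) equals the real linear span of the diagonal
matrices `diag(n_s − n(c))` for `s` in the support of `c`. -/
theorem stmt_12 (N d : ℕ) (hN : 1 ≤ N) (hNd : N ≤ d)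
    (c : CoeffVec N d) (hc : Normalized c)
    (hdiag : ∀ j k : Fin d, j ≠ k → rho1 c j k = 0)
    (hadapt : ∀ h : Matrix (Fin d) (Fin d) ℂ, h.IsHermitian →
      (∃ lam : ℝ, oneBodyC h c = (lam : ℂ) • c) →
      ∃ lam' : ℝ,
        oneBodyC (Matrix.diagonal fun j => h j j) c = (lam' : ℂ) • c) :
    { X : Matrix (Fin d) (Fin d) ℂ |
        (∃ A : CoeffVec N d →ₗ[ℂ] CoeffVec N d,
          (∀ x y : CoeffVec N d, cinner (A x) y = - cinner x (A y)) ∧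
          X = Bform (A c) c + Bform c (A c)) ∧
        ∃ v : Fin d → ℝ, X = Matrix.diagonal fun j => ((v j : ℝ) : ℂ) } =
    ↑(Submodule.span ℝ
        { X : Matrix (Fin d) (Fin d) ℂ |
            ∃ s : Config N d, c s ≠ 0 ∧
              X = Matrix.diagonal fun j => ((occVec s j - occ c j : ℝ) : ℂ) }) := by
  exact stmt_12_aux N d hN hNd c hc hdiag hadapt
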